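/- Let f = Σ_{k∈A} c_k e_k be a trigonometric polynomial (A ⊂ ℤ finite, e_k(x) = e^{2πikx}). Then ‖f‖_{ψ₂} ≤ (Σ|c_k|) / √(log(1 + (Σ|c_k|)²/Σ|c_k|²)). -/

import Mathlib

/-!
Write `S = Σ ‖c_k‖`, `Q = Σ ‖c_k‖²` and `λ = S / √(log (1 + S²/Q))`. Pointwise `‖f‖ ≤ S`, so
`t = ‖f‖²/S² ∈ [0, 1]`, and convexity of `exp` gives
`exp (‖f‖²/λ²) - 1 = exp (t log (1 + S²/Q)) - 1 ≤ t S²/Q = ‖f‖²/Q`.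
Integrating and using Parseval, `∫ ‖f‖² = Q`, shows that `λ` is admissible in the infimum
defining `‖f‖_{ψ₂}`.
-/

open MeasureTheory

/-- The `ψ₂`-Orlicz (Luxemburg) norm for complex-valued functions,
`ψ₂(x) = e^{x²} - 1`. -/
noncomputable def psi2Norm {Ω : Type*} [MeasurableSpace Ω] (μ : Measure Ω)
    (f : Ω → ℂ) : ℝ :=
  sInf {l : ℝ | 0 < l ∧ ∫ ω, (Real.exp ((‖f ω‖ / l) ^ 2) - 1) ∂μ ≤ 1}

namespace Real

theorem exp_mul_sub_one_le {t a : ℝ} (ht₀ : 0 ≤ t) (ht₁ : t ≤ 1) :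
    exp (t * a) - 1 ≤ t * (exp a - 1) := by
  have h := convexOn_exp.2 (Set.mem_univ 0) (Set.mem_univ a) (sub_nonneg.2 ht₁) ht₀
    (sub_add_cancel 1 t)
  simp only [smul_eq_mul, mul_zero, zero_add, exp_zero, mul_one] at h
  linarith

theorem exp_div_sq_mul_log_sub_one_le {x S Q : ℝ} (hS : 0 < S) (hQ : 0 < Q) (hx₀ : 0 ≤ x)
    (hxS : x ≤ S) : exp (x ^ 2 / S ^ 2 * log (1 + S ^ 2 / Q)) - 1 ≤ x ^ 2 / Q := by
  have ht₁ : x ^ 2 / S ^ 2 ≤ 1 := div_le_one_of_le₀ (pow_le_pow_left₀ hx₀ hxS 2) (by positivity)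
  calc exp (x ^ 2 / S ^ 2 * log (1 + S ^ 2 / Q)) - 1
      ≤ x ^ 2 / S ^ 2 * (exp (log (1 + S ^ 2 / Q)) - 1) :=
        exp_mul_sub_one_le (by positivity) ht₁
    _ = x ^ 2 / Q := by
        rw [exp_log (by positivity)]
        field_simp
        ring

end Real

open Real

section Psi2Norm

variable {Ω : Type*} [MeasurableSpace Ω] {μ : Measure Ω} {f : Ω → ℂ}

theorem psi2Norm_le {l : ℝ} (hl : 0 < l) (h : ∫ ω, (exp ((‖f ω‖ / l) ^ 2) - 1) ∂μ ≤ 1) :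
    psi2Norm μ f ≤ l :=
  csInf_le ⟨0, fun _ hl' => hl'.1.le⟩ ⟨hl, h⟩

theorem psi2Norm_zero : psi2Norm μ (0 : Ω → ℂ) = 0 := by
  simp only [psi2Norm, Pi.zero_apply, norm_zero, zero_div, ne_eq, OfNat.ofNat_ne_zero,
    not_false_eq_true, zero_pow, exp_zero, sub_self, integral_zero, zero_le_one, and_true]
  exact csInf_Ioi

theorem psi2Norm_le_of_norm_le_of_integral_sq_le {S Q : ℝ} (hf : MemLp f 2 μ) (hS : 0 < S)
    (hQ : 0 < Q) (hfS : ∀ᵐ ω ∂μ, ‖f ω‖ ≤ S) (hfQ : ∫ ω, ‖f ω‖ ^ 2 ∂μ ≤ Q) :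
    psi2Norm μ f ≤ S / √(log (1 + S ^ 2 / Q)) := by
  set a := log (1 + S ^ 2 / Q)
  have ha : 0 < a := log_pos (lt_add_of_pos_right 1 (by positivity))
  refine psi2Norm_le (by positivity) ?_
  have hpoint : ∀ᵐ ω ∂μ, exp ((‖f ω‖ / (S / √a)) ^ 2) - 1 ≤ ‖f ω‖ ^ 2 / Q := by
    filter_upwards [hfS] with ω hω
    have : (‖f ω‖ / (S / √a)) ^ 2 = ‖f ω‖ ^ 2 / S ^ 2 * a := by
      rw [div_pow, div_pow, sq_sqrt ha.le]
      field_simp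
    rw [this]
    exact exp_div_sq_mul_log_sub_one_le hS hQ (norm_nonneg _) hω
  calc ∫ ω, (exp ((‖f ω‖ / (S / √a)) ^ 2) - 1) ∂μ
      ≤ ∫ ω, ‖f ω‖ ^ 2 / Q ∂μ :=
        integral_mono_of_nonneg (ae_of_all _ fun ω => sub_nonneg.2 (one_le_exp (sq_nonneg _)))
          ((hf.integrable_norm_pow two_ne_zero).div_const Q) hpoint
    _ = (∫ ω, ‖f ω‖ ^ 2 ∂μ) / Q := integral_div Q _
    _ ≤ 1 := div_le_one_of_le₀ hfQ hQ.le

end Psi2Norm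

section TrigPoly

open AddCircle

variable {T : ℝ}

theorem norm_sum_mul_fourier_le (A : Finset ℤ) (c : ℤ → ℂ) (x : AddCircle T) :
    ‖∑ k ∈ A, c k * fourier k x‖ ≤ ∑ k ∈ A, ‖c k‖ :=
  (norm_sum_le _ _).trans_eq <| Finset.sum_congr rfl fun k _ => by
    rw [norm_mul, fourier_apply, Circle.norm_coe, mul_one]

variable [Fact (0 < T)]

theorem integral_norm_sum_mul_fourier_sq (A : Finset ℤ) (c : ℤ → ℂ) :
    ∫ x : AddCircle T, ‖∑ k ∈ A, c k * fourier k x‖ ^ 2 ∂haarAddCircle = ∑ k ∈ A, ‖c k‖ ^ 2 := by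
  set g : Lp ℂ 2 (haarAddCircle : Measure (AddCircle T)) := ∑ k ∈ A, c k • fourierLp 2 k
  have hg : g =ᵐ[haarAddCircle] fun x => ∑ k ∈ A, c k * fourier k x := by
    have hg_toLp : g = ContinuousMap.toLp 2 haarAddCircle ℂ (∑ k ∈ A, c k • fourier k) := by
      simp [g, map_sum, map_smul]
    rw [hg_toLp]
    filter_upwards [ContinuousMap.coeFn_toLp (p := 2) (𝕜 := ℂ) haarAddCircle
      (∑ k ∈ A, c k • fourier k)] with x hx
    exact hx.trans (by simp)
  suffices h : ((∫ x : AddCircle T, ‖∑ k ∈ A, c k * fourier k x‖ ^ 2 ∂haarAddCircle : ℝ) : ℂ) =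
      ∑ k ∈ A, ((‖c k‖ ^ 2 : ℝ) : ℂ) by exact_mod_cast h
  calc _ = ∫ x, inner ℂ (g x) (g x) ∂haarAddCircle := by
        rw [← integral_complex_ofReal]
        refine integral_congr_ae ?_
        filter_upwards [hg] with x hx
        simp [hx, inner_self_eq_norm_sq_to_K]
    _ = inner ℂ g g := (L2.inner_def g g).symm
    _ = ∑ k ∈ A, (starRingEnd ℂ) (c k) * c k := orthonormal_fourier.inner_sum c c A
    _ = _ := Finset.sum_congr rfl fun k _ => by simp [Complex.conj_mul']

end TrigPoly

/-- For a trigonometric polynomial `f = Σ_{k∈A} c_k e_k`,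
`‖f‖_{ψ₂} ≤ (Σ|c_k|)/√(log(1 + (Σ|c_k|)²/Σ|c_k|²))`. -/
theorem psi2_trig_poly_bound (A : Finset ℤ) (c : ℤ → ℂ) :
    psi2Norm (volume : Measure (AddCircle (1 : ℝ)))
        (fun x => ∑ k ∈ A, c k * fourier k x) ≤
      (∑ k ∈ A, ‖c k‖) /
        Real.sqrt (Real.log (1 + (∑ k ∈ A, ‖c k‖) ^ 2 / ∑ k ∈ A, ‖c k‖ ^ 2)) := by
  obtain hS | hS := (Finset.sum_nonneg fun k _ => norm_nonneg (c k) :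
    0 ≤ ∑ k ∈ A, ‖c k‖).eq_or_lt
  · have hc : ∀ k ∈ A, c k = 0 := by
      simpa using (Finset.sum_eq_zero_iff_of_nonneg fun k _ => norm_nonneg (c k)).1 hS.symm
    have hf : (fun x : AddCircle (1 : ℝ) => ∑ k ∈ A, c k * fourier k x) = 0 :=
      funext fun x => Finset.sum_eq_zero fun k hk => by simp [hc k hk]
    rw [hf, psi2Norm_zero, ← hS, zero_div]
  · obtain ⟨k, hk, hck⟩ := Finset.exists_ne_zero_of_sum_ne_zero hS.ne'
    have hQ : 0 < ∑ k ∈ A, ‖c k‖ ^ 2 :=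
      Finset.sum_pos' (fun _ _ => sq_nonneg _) ⟨k, hk, by positivity⟩
    have hvolume : (volume : Measure (AddCircle (1 : ℝ))) = AddCircle.haarAddCircle := by
      simp [AddCircle.volume_eq_smul_haarAddCircle]
    rw [hvolume]
    have hbound := ae_of_all AddCircle.haarAddCircle (norm_sum_mul_fourier_le (T := 1) A c)
    exact psi2Norm_le_of_norm_le_of_integral_sq_le (.of_bound (by fun_prop) _ hbound) hS hQ hbound
      (integral_norm_sum_mul_fourier_sq A c).le
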